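/- arXiv:2001.09076 — 11 statements merged into one kernel-verified Lean document; each statement's English description precedes it below -/
import Mathlib

section
/- If (x₁,y₁) and (x₂,y₂) lie on the Edwards curve x² + y² = 1 + d x²y², and 1 + d x₁x₂y₁y₂ ≠ 0 and 1 - d x₁x₂y₁y₂ ≠ 0, then the point ((x₁y₂ + y₁x₂)/(1 + d x₁x₂y₁y₂), (y₁y₂ - x₁x₂)/(1 - d x₁x₂y₁y₂)) also lies on the curve. -/
/-!
Clearing the denominators `(1 + d x₁x₂y₁y₂)²(1 - d x₁x₂y₁y₂)²` turns the claim into a polynomial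
identity, which holds modulo the two curve equations: its defect is an explicit combination of the
defects `x² + y² - 1 - d x²y²` of the two summands.
-/

theorem edwards_add_cleared_denominators {R : Type*} [CommRing R] {d x₁ y₁ x₂ y₂ : R}
    (h₁ : x₁ ^ 2 + y₁ ^ 2 = 1 + d * x₁ ^ 2 * y₁ ^ 2)
    (h₂ : x₂ ^ 2 + y₂ ^ 2 = 1 + d * x₂ ^ 2 * y₂ ^ 2) :
    (x₁ * y₂ + y₁ * x₂) ^ 2 * (1 - d * x₁ * x₂ * y₁ * y₂) ^ 2 +
        (y₁ * y₂ - x₁ * x₂) ^ 2 * (1 + d * x₁ * x₂ * y₁ * y₂) ^ 2 =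
      (1 + d * x₁ * x₂ * y₁ * y₂) ^ 2 * (1 - d * x₁ * x₂ * y₁ * y₂) ^ 2 +
        d * (x₁ * y₂ + y₁ * x₂) ^ 2 * (y₁ * y₂ - x₁ * x₂) ^ 2 := by
  linear_combination
    ((1 + (d * x₁ * x₂ * y₁ * y₂) ^ 2) * (x₂ ^ 2 + y₂ ^ 2) -
        d * x₂ ^ 2 * y₂ ^ 2 * (x₁ ^ 2 + y₁ ^ 2 + 1 + d * x₁ ^ 2 * y₁ ^ 2)) * h₁ +
      ((1 + (d * x₁ * x₂ * y₁ * y₂) ^ 2) * (1 + d * x₁ ^ 2 * y₁ ^ 2) -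
        d * x₁ ^ 2 * y₁ ^ 2 * (x₂ ^ 2 + y₂ ^ 2 + 1 + d * x₂ ^ 2 * y₂ ^ 2)) * h₂

theorem edwards_eq_div_iff {F : Type*} [Field F] {d a b p q : F} (hp : p ≠ 0) (hq : q ≠ 0) :
    (a / p) ^ 2 + (b / q) ^ 2 = 1 + d * (a / p) ^ 2 * (b / q) ^ 2 ↔
      a ^ 2 * q ^ 2 + b ^ 2 * p ^ 2 = p ^ 2 * q ^ 2 + d * a ^ 2 * b ^ 2 := by
  field_simp

/-- The Edwards addition law produces a point on the Edwards curve. -/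
theorem edwards_addition_closed {F : Type*} [Field F] (d x₁ y₁ x₂ y₂ : F)
    (h₁ : x₁ ^ 2 + y₁ ^ 2 = 1 + d * x₁ ^ 2 * y₁ ^ 2)
    (h₂ : x₂ ^ 2 + y₂ ^ 2 = 1 + d * x₂ ^ 2 * y₂ ^ 2)
    (hp : 1 + d * x₁ * x₂ * y₁ * y₂ ≠ 0)
    (hm : 1 - d * x₁ * x₂ * y₁ * y₂ ≠ 0) :
    ((x₁ * y₂ + y₁ * x₂) / (1 + d * x₁ * x₂ * y₁ * y₂)) ^ 2 +
      ((y₁ * y₂ - x₁ * x₂) / (1 - d * x₁ * x₂ * y₁ * y₂)) ^ 2 =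
    1 + d * ((x₁ * y₂ + y₁ * x₂) / (1 + d * x₁ * x₂ * y₁ * y₂)) ^ 2 *
      ((y₁ * y₂ - x₁ * x₂) / (1 - d * x₁ * x₂ * y₁ * y₂)) ^ 2 :=
  (edwards_eq_div_iff hp hm).mpr (edwards_add_cleared_denominators h₁ h₂)
end

section
/- The Somos-4 QRT map φ(x,y) = (y, (αy+β)/(xy²)) preserves the biquadratic pencil: if x²y² + α(x+y) + β - J·xy = 0 with x,y ≠ 0, then the image point (x',y') = (y, (αy+β)/(xy²)) satisfies x'²y'² + α(x'+y') + β - J·x'y' = 0. -/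
/-- The Somos-4 QRT map preserves the biquadratic pencil. -/
theorem somos4_qrt_preserves_pencil {F : Type*} [Field F] (α β J x y : F)
    (hx : x ≠ 0) (hy : y ≠ 0)
    (h : x ^ 2 * y ^ 2 + α * (x + y) + β - J * (x * y) = 0) :
    y ^ 2 * ((α * y + β) / (x * y ^ 2)) ^ 2 +
      α * (y + (α * y + β) / (x * y ^ 2)) + β -
      J * (y * ((α * y + β) / (x * y ^ 2))) = 0 := by
  have hβ : β = J * (x * y) - x ^ 2 * y ^ 2 - α * (x + y) := by linear_combination h
  subst hβ
  field_simp
  ring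
end

section
/- The function J(x,y) = (x²y² + α(x+y) + β)/(xy) is a conserved quantity of the Somos-4 QRT map: for x, y nonzero with αy + β ≠ 0, J(y, (αy+β)/(xy²)) = J(x,y). -/
/-- `J(x,y) = (x²y² + α(x+y) + β)/(xy)` is conserved by the Somos-4 QRT map. -/
theorem somos4_conserved_quantity {F : Type*} [Field F] (α β x y : F)
    (hx : x ≠ 0) (hy : y ≠ 0) (hab : α * y + β ≠ 0) :
    (y ^ 2 * ((α * y + β) / (x * y ^ 2)) ^ 2 +
        α * (y + (α * y + β) / (x * y ^ 2)) + β) /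
      (y * ((α * y + β) / (x * y ^ 2))) =
    (x ^ 2 * y ^ 2 + α * (x + y) + β) / (x * y) := by
  have hxy2 : x * y ^ 2 ≠ 0 := mul_ne_zero hx (pow_ne_zero _ hy)
  have hd : y * ((α * y + β) / (x * y ^ 2)) ≠ 0 :=
    mul_ne_zero hy (div_ne_zero hab hxy2)
  rw [div_eq_div_iff hd (mul_ne_zero hx hy)]
  field_simp
  ring
end

section
/- The function K(x,y) = (xy(x+y) + a(x+y)² + (a²+b)(x+y) + ab)/(xy) is a conserved quantity of the Lyness map: for x, y nonzero with ay + b ≠ 0, K(y, (ay+b)/x) = K(x,y). -/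
/-- `K(x,y)` is a conserved quantity of the Lyness map. -/
theorem lyness_conserved_quantity {F : Type*} [Field F] (a b x y : F)
    (hx : x ≠ 0) (hy : y ≠ 0) (hab : a * y + b ≠ 0) :
    (y * ((a * y + b) / x) * (y + (a * y + b) / x) +
        a * (y + (a * y + b) / x) ^ 2 +
        (a ^ 2 + b) * (y + (a * y + b) / x) + a * b) /
      (y * ((a * y + b) / x)) =
    (x * y * (x + y) + a * (x + y) ^ 2 + (a ^ 2 + b) * (x + y) + a * b) /
      (x * y) := by
  have h1 : y * ((a * y + b) / x) ≠ 0 := by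
    exact mul_ne_zero hy (div_ne_zero hab hx)
  have h2 : x * y ≠ 0 := mul_ne_zero hx hy
  rw [div_eq_div_iff h1 h2]
  field_simp
  ring
end

section
/- When b = a², the Lyness recurrence is 5-periodic: if u : ℤ → F satisfies u(n+2)·u(n) = a·u(n+1) + a² for all n, with u(n) ≠ 0 for all n, then u(n+5) = u(n) for all n. -/
/-- When `b = a²`, the Lyness recurrence is 5-periodic. -/
theorem lyness_five_periodic {F : Type*} [Field F] (a : F) (ha : a ≠ 0)
    (u : ℤ → F) (hu : ∀ n : ℤ, u n ≠ 0)
    (hrec : ∀ n : ℤ, u (n + 2) * u n = a * u (n + 1) + a ^ 2) :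
    ∀ n : ℤ, u (n + 5) = u n := by
  intro n
  have h0 := hrec n
  have h1 := hrec (n + 1)
  have h2 := hrec (n + 2)
  have h3 := hrec (n + 3)
  rw [show n + 1 + 2 = n + 3 by ring, show n + 1 + 1 = n + 2 by ring] at h1
  rw [show n + 2 + 2 = n + 4 by ring, show n + 2 + 1 = n + 3 by ring] at h2
  rw [show n + 3 + 2 = n + 5 by ring, show n + 3 + 1 = n + 4 by ring] at h3
  have key : u (n + 5) * (u n * u (n + 1) * u (n + 2) * u (n + 3)) =
      u n * (u n * u (n + 1) * u (n + 2) * u (n + 3)) := by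
    linear_combination (u n * u (n + 1) * u (n + 2)) * h3 + (a * u n * u (n + 1)) * h2 +
      (a ^ 2 * u n - u n ^ 2 * u (n + 2)) * h1 +
      (-(a * u n * u (n + 2)) - a ^ 2 * u n) * h0
  have hne : u n * u (n + 1) * u (n + 2) * u (n + 3) ≠ 0 := by
    exact mul_ne_zero (mul_ne_zero (mul_ne_zero (hu n) (hu (n + 1))) (hu (n + 2))) (hu (n + 3))
  exact mul_right_cancel₀ hne key
end

section
/- If a sequence τ : ℤ → F with all terms nonzero satisfies the Somos-4 recurrence τ(n+4)τ(n) = α·τ(n+3)τ(n+1) + β·τ(n+2)², then u(n) = τ(n-1)τ(n+1)/τ(n)² satisfies u(n+2)·u(n)·u(n+1)² = α·u(n+1) + β for all n. -/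
/-! The product `u (n + 2) * u n * u (n + 1) ^ 2` telescopes to `τ (n - 1) * τ (n + 3) / τ (n + 1) ^ 2`,
while `α * u (n + 1) + β` is `(α * τ n * τ (n + 2) + β * τ (n + 1) ^ 2) / τ (n + 1) ^ 2`; the Somos-4
recurrence at `n - 1` says exactly that the two numerators agree. -/

def somosRatio {F : Type*} [Field F] (τ : ℤ → F) (n : ℤ) : F :=
  τ (n - 1) * τ (n + 1) / τ n ^ 2

section

variable {F : Type*} [Field F] (τ : ℤ → F) (n : ℤ)

theorem somosRatio_mul_mul_sq (h₀ : τ n ≠ 0) (h₁ : τ (n + 1) ≠ 0) (h₂ : τ (n + 2) ≠ 0) :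
    somosRatio τ (n + 2) * somosRatio τ n * somosRatio τ (n + 1) ^ 2 =
      τ (n - 1) * τ (n + 3) / τ (n + 1) ^ 2 := by
  simp only [somosRatio, show n + 2 - 1 = n + 1 by ring, show n + 1 - 1 = n by ring,
    show n + 1 + 1 = n + 2 by ring, show n + 2 + 1 = n + 3 by ring]
  field_simp

theorem mul_somosRatio_add (α β : F) (h₁ : τ (n + 1) ≠ 0) :
    α * somosRatio τ (n + 1) + β = (α * (τ n * τ (n + 2)) + β * τ (n + 1) ^ 2) / τ (n + 1) ^ 2 := by
  simp only [somosRatio, show n + 1 - 1 = n by ring, show n + 1 + 1 = n + 2 by ring]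
  field_simp

end

/-- A Somos-4 sequence yields a solution of the Somos-4 QRT recurrence. -/
theorem somos4_reduction {F : Type*} [Field F] (α β : F) (τ : ℤ → F)
    (hτ : ∀ n : ℤ, τ n ≠ 0)
    (hrec : ∀ n : ℤ, τ (n + 4) * τ n = α * (τ (n + 3) * τ (n + 1)) + β * (τ (n + 2)) ^ 2)
    (u : ℤ → F) (hu : ∀ n : ℤ, u n = τ (n - 1) * τ (n + 1) / (τ n) ^ 2) :
    ∀ n : ℤ, u (n + 2) * u n * (u (n + 1)) ^ 2 = α * u (n + 1) + β := by
  obtain rfl : u = somosRatio τ := funext hu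
  intro n
  have hrec' : τ (n + 3) * τ (n - 1) = α * (τ (n + 2) * τ n) + β * τ (n + 1) ^ 2 := by
    simpa only [show n - 1 + 4 = n + 3 by ring, show n - 1 + 3 = n + 2 by ring,
      show n - 1 + 1 = n by ring, show n - 1 + 2 = n + 1 by ring] using hrec (n - 1)
  rw [somosRatio_mul_mul_sq τ n (hτ _) (hτ _) (hτ _), mul_somosRatio_add τ n α β (hτ _),
    mul_comm (τ (n - 1)), hrec', mul_comm (τ (n + 2))]
end

section
/- If a sequence τ : ℤ → F with all terms nonzero satisfies the Somos-5 recurrence τ(n+5)τ(n) = α̃·τ(n+4)τ(n+1) + β̃·τ(n+3)τ(n+2), then u(n) = τ(n-2)τ(n+1)/(τ(n-1)τ(n)) satisfies u(n+2)·u(n)·u(n+1) = α̃·u(n+1) + β̃ for all n. -/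
/-
Three consecutive ratios telescope: u(n) u(n+1) u(n+2) = τ(n-2) τ(n+3) / (τ(n) τ(n+1)),
and α u(n+1) + β has the same denominator, its numerator
α τ(n-1) τ(n+2) + β τ(n) τ(n+1) being τ(n-2) τ(n+3) by the Somos-5 recurrence at n - 2.
-/

section

variable {F : Type*} [Field F] {τ u : ℤ → F}

theorem somos5_ratio_mul_telescope (hτ : ∀ n, τ n ≠ 0)
    (hu : ∀ n, u n = τ (n - 2) * τ (n + 1) / (τ (n - 1) * τ n)) (n : ℤ) :
    u (n + 2) * u n * u (n + 1) = τ (n - 2) * τ (n + 3) / (τ n * τ (n + 1)) := by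
  simp only [hu, show n + 2 - 2 = n by ring, show n + 2 - 1 = n + 1 by ring,
    show n + 2 + 1 = n + 3 by ring, show n + 1 - 2 = n - 1 by ring, show n + 1 - 1 = n by ring,
    show n + 1 + 1 = n + 2 by ring]
  have := hτ (n - 1); have := hτ n; have := hτ (n + 1); have := hτ (n + 2)
  field_simp

theorem somos5_ratio_add (hτ : ∀ n, τ n ≠ 0)
    (hu : ∀ n, u n = τ (n - 2) * τ (n + 1) / (τ (n - 1) * τ n)) (α β : F) (n : ℤ) :
    α * u (n + 1) + β = (α * (τ (n + 2) * τ (n - 1)) + β * (τ (n + 1) * τ n)) / (τ n * τ (n + 1)) := by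
  rw [hu, show n + 1 - 2 = n - 1 by ring, show n + 1 - 1 = n by ring,
    show n + 1 + 1 = n + 2 by ring]
  have := hτ n; have := hτ (n + 1)
  field_simp

end

/-- A Somos-5 sequence yields a solution of the Somos-5 QRT recurrence. -/
theorem somos5_reduction {F : Type*} [Field F] (α β : F) (τ : ℤ → F)
    (hτ : ∀ n : ℤ, τ n ≠ 0)
    (hrec : ∀ n : ℤ, τ (n + 5) * τ n = α * (τ (n + 4) * τ (n + 1)) + β * (τ (n + 3) * τ (n + 2)))
    (u : ℤ → F) (hu : ∀ n : ℤ, u n = τ (n - 2) * τ (n + 1) / (τ (n - 1) * τ n)) :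
    ∀ n : ℤ, u (n + 2) * u n * u (n + 1) = α * u (n + 1) + β := by
  intro n
  have hrec' := hrec (n - 2)
  rw [show n - 2 + 5 = n + 3 by ring, show n - 2 + 4 = n + 2 by ring,
    show n - 2 + 1 = n - 1 by ring, show n - 2 + 3 = n + 1 by ring,
    show n - 2 + 2 = n by ring] at hrec'
  rw [somos5_ratio_mul_telescope hτ hu, somos5_ratio_add hτ hu, ← hrec', mul_comm (τ (n + 3))]
end

section
/- If a sequence τ : ℤ → F with all terms nonzero satisfies the special Somos-7 recurrence τ(n+7)τ(n) = a·τ(n+6)τ(n+1) + b·τ(n+4)τ(n+3), then u(n) = τ(n-3)τ(n+2)/(τ(n-1)τ(n)) satisfies the Lyness recurrence u(n+2)·u(n) = a·u(n+1) + b for all n. -/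
/-!
The product `u (n + 2) * u n` telescopes to `τ (n - 3) * τ (n + 4) / (τ n * τ (n + 1))`, and
`u (n + 1)` has the same denominator, so the Lyness relation at `n` is the Somos-7 relation at
`n - 3` divided by `τ n * τ (n + 1)`.
-/

section SomosRatio

variable {F : Type*} [Field F] {τ u : ℤ → F}

theorem ratio_add_two_mul_ratio (hτ : ∀ n : ℤ, τ n ≠ 0)
    (hu : ∀ n : ℤ, u n = τ (n - 3) * τ (n + 2) / (τ (n - 1) * τ n)) (n : ℤ) :
    u (n + 2) * u n = τ (n - 3) * τ (n + 4) / (τ n * τ (n + 1)) := by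
  rw [hu, hu, show n + 2 - 3 = n - 1 by ring, show n + 2 + 2 = n + 4 by ring,
    show n + 2 - 1 = n + 1 by ring]
  field_simp [hτ]

theorem ratio_add_one
    (hu : ∀ n : ℤ, u n = τ (n - 3) * τ (n + 2) / (τ (n - 1) * τ n)) (n : ℤ) :
    u (n + 1) = τ (n - 2) * τ (n + 3) / (τ n * τ (n + 1)) := by
  rw [hu, show n + 1 - 3 = n - 2 by ring, show n + 1 + 2 = n + 3 by ring,
    show n + 1 - 1 = n by ring]

end SomosRatio

/-- A special Somos-7 sequence yields a solution of the Lyness recurrence. -/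
theorem somos7_reduction_lyness {F : Type*} [Field F] (a b : F) (τ : ℤ → F)
    (hτ : ∀ n : ℤ, τ n ≠ 0)
    (hrec : ∀ n : ℤ, τ (n + 7) * τ n = a * (τ (n + 6) * τ (n + 1)) + b * (τ (n + 4) * τ (n + 3)))
    (u : ℤ → F) (hu : ∀ n : ℤ, u n = τ (n - 3) * τ (n + 2) / (τ (n - 1) * τ n)) :
    ∀ n : ℤ, u (n + 2) * u n = a * u (n + 1) + b := by
  intro n
  have hsomos := hrec (n - 3)
  rw [show n - 3 + 7 = n + 4 by ring, show n - 3 + 6 = n + 3 by ring,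
    show n - 3 + 1 = n - 2 by ring, show n - 3 + 4 = n + 1 by ring,
    show n - 3 + 3 = n by ring] at hsomos
  rw [ratio_add_two_mul_ratio hτ hu, ratio_add_one hu, div_eq_iff (by simp [hτ]),
    mul_comm (τ (n - 3)), hsomos]
  field_simp [hτ]
end

section
/- The Lyness doubling map preserves the Lyness pencil: if (x,y) with x,y ≠ 0, x ≠ y, y² - ax - b ≠ 0, x² - ay - b ≠ 0, satisfies xy(x+y) + a(x+y)² + (a²+b)(x+y) + ab - K·xy = 0, then the point (R(x,y), R(y,x)), where R(x,y) = (xy - ay - b)(x²y - a²x - by - ab)/(x(x-y)(y² - ax - b)), satisfies the same equation with the same K. -/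
set_option maxHeartbeats 1000000 in
/-- The Lyness doubling map preserves the Lyness pencil. -/
theorem lyness_doubling_preserves_pencil {F : Type*} [Field F] (a b K x y : F)
    (hx : x ≠ 0) (hy : y ≠ 0) (hxy : x ≠ y)
    (h1 : y ^ 2 - a * x - b ≠ 0) (h2 : x ^ 2 - a * y - b ≠ 0)
    (hcurve : x * y * (x + y) + a * (x + y) ^ 2 + (a ^ 2 + b) * (x + y) + a * b
        - K * (x * y) = 0) :
    let R : F → F → F := fun x y =>
      (x * y - a * y - b) * (x ^ 2 * y - a ^ 2 * x - b * y - a * b) /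
        (x * (x - y) * (y ^ 2 - a * x - b))
    R x y * R y x * (R x y + R y x) + a * (R x y + R y x) ^ 2 +
      (a ^ 2 + b) * (R x y + R y x) + a * b - K * (R x y * R y x) = 0 := by
  intro R
  have hxy' : x - y ≠ 0 := sub_ne_zero.mpr hxy
  have hyx : y - x ≠ 0 := sub_ne_zero.mpr (Ne.symm hxy)
  have hDx : x * (x - y) * (y ^ 2 - a * x - b) ≠ 0 := mul_ne_zero (mul_ne_zero hx hxy') h1
  have hDy : y * (y - x) * (x ^ 2 - a * y - b) ≠ 0 := mul_ne_zero (mul_ne_zero hy hyx) h2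
  -- The pure polynomial identity P2 = Q2 * H, specialized via hcurve:
  have step2 : ((x * y - a * y - b) * (x ^ 2 * y - a ^ 2 * x - b * y - a * b)
          * (y * (y - x) * (x ^ 2 - a * y - b))
        + (y * x - a * x - b) * (y ^ 2 * x - a ^ 2 * y - b * x - a * b)
          * (x * (x - y) * (y ^ 2 - a * x - b)))
      * ((x * y - a * y - b) * (x ^ 2 * y - a ^ 2 * x - b * y - a * b)
        * ((y * x - a * x - b) * (y ^ 2 * x - a ^ 2 * y - b * x - a * b)))
      + a * ((x * y - a * y - b) * (x ^ 2 * y - a ^ 2 * x - b * y - a * b)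
          * (y * (y - x) * (x ^ 2 - a * y - b))
        + (y * x - a * x - b) * (y ^ 2 * x - a ^ 2 * y - b * x - a * b)
          * (x * (x - y) * (y ^ 2 - a * x - b))) ^ 2
      + (a ^ 2 + b) * ((x * y - a * y - b) * (x ^ 2 * y - a ^ 2 * x - b * y - a * b)
          * (y * (y - x) * (x ^ 2 - a * y - b))
        + (y * x - a * x - b) * (y ^ 2 * x - a ^ 2 * y - b * x - a * b)
          * (x * (x - y) * (y ^ 2 - a * x - b)))
        * (x * (x - y) * (y ^ 2 - a * x - b) * (y * (y - x) * (x ^ 2 - a * y - b)))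
      + a * b * (x * (x - y) * (y ^ 2 - a * x - b) * (y * (y - x) * (x ^ 2 - a * y - b))) ^ 2
      - K * ((x * y - a * y - b) * (x ^ 2 * y - a ^ 2 * x - b * y - a * b)
          * ((y * x - a * x - b) * (y ^ 2 * x - a ^ 2 * y - b * x - a * b)))
        * (x * (x - y) * (y ^ 2 - a * x - b) * (y * (y - x) * (x ^ 2 - a * y - b))) = 0 := by
    linear_combination ((((((((-x^7*y^9 + (2*x^8*y^8 + -x^9*y^7)) + (a*x^5*y^10 + (-a*x^6*y^9 + -a*x^9*y^6))) + ((a*x^10*y^5 + (-a^2*x^4*y^10 + a^2*x^5*y^9)) + ((a^2*x^6*y^8 + -2*a^2*x^7*y^7) + (a^2*x^8*y^6 + a^2*x^9*y^5)))) + (((-a^2*x^10*y^4 + (-a^3*x^4*y^9 + a^3*x^5*y^8)) + ((a^3*x^8*y^5 + -a^3*x^9*y^4) + (2*a^4*x^3*y^9 + -2*a^4*x^4*y^8))) + ((-2*a^4*x^8*y^4 + (2*a^4*x^9*y^3 + -a^5*x^3*y^8)) + ((a^5*x^4*y^7 + a^5*x^7*y^4) + (-a^5*x^8*y^3 + -a^6*x^2*y^8)))))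 + ((((a^6*x^3*y^7 + (a^6*x^4*y^6 + -2*a^6*x^5*y^5)) + ((a^6*x^6*y^4 + a^6*x^7*y^3) + (-a^6*x^8*y^2 + a^7*x^2*y^7))) + ((-a^7*x^3*y^6 + (-a^7*x^6*y^3 + a^7*x^7*y^2)) + ((-a^8*x^3*y^5 + 2*a^8*x^4*y^4) + (-a^8*x^5*y^3 + 2*b*x^5*y^9)))) + (((-2*b*x^6*y^8 + (-2*b*x^8*y^6 + 2*b*x^9*y^5)) + ((-a*b*x^3*y^10 + -2*a*b*x^4*y^9) + (3*a*b*x^5*y^8 + 3*a*b*x^8*y^5))) + ((-2*a*b*x^9*y^4 + (-a*b*x^10*y^3 + a^2*b*x^2*y^10)) + ((-a^2*b*x^3*y^9 + -a^2*b*x^5*y^7) + (2*a^2*b*x^6*y^6 + -a^2*b*x^7*y^5)))))) + (((((-a^2*b*x^9*y^3 + (a^2*b*x^10*y^2 + a^3*b*x^2*y^9)) + ((6*a^3*b*x^3*y^8 + -9*a^3*b*x^4*y^7) + (2*a^3*b*x^5*y^6 + 2*a^3*b*x^6*y^5))) + ((-9*a^3*b*x^7*y^4 + (6*a^3*b*x^8*y^3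 + a^3*b*x^9*y^2)) + ((-a^4*b*x*y^9 + -a^4*b*x^2*y^8) + (-2*a^4*b*x^3*y^7 + 3*a^4*b*x^4*y^6)))) + (((2*a^4*b*x^5*y^5 + (3*a^4*b*x^6*y^4 + -2*a^4*b*x^7*y^3)) + ((-a^4*b*x^8*y^2 + -a^4*b*x^9*y) + (-4*a^5*b*x^2*y^7 + 9*a^5*b*x^3*y^6))) + ((-5*a^5*b*x^4*y^5 + (-5*a^5*b*x^5*y^4 + 9*a^5*b*x^6*y^3)) + ((-4*a^5*b*x^7*y^2 + 2*a^6*b*x*y^7) + (-4*a^6*b*x^4*y^4 + 2*a^6*b*x^7*y))))) + ((((-3*a^7*b*x^2*y^5 + (3*a^7*b*x^3*y^4 + 3*a^7*b*x^4*y^3)) + ((-3*a^7*b*x^5*y^2 + -b^2*x^3*y^9) + (-2*b^2*x^4*y^8 + 2*b^2*x^5*y^7))) + ((2*b^2*x^6*y^6 + (2*b^2*x^7*y^5 + -2*b^2*x^8*y^4)) + ((-b^2*x^9*y^3 + 3*a*b^2*x^2*y^9) + (-a*b^2*x^3*y^8 + -2*a*b^2*x^5*y^6)))) + (((-2*a*b^2*x^6*y^5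 + (-a*b^2*x^8*y^3 + 3*a*b^2*x^9*y^2)) + ((-a^2*b^2*x*y^9 + 3*a^2*b^2*x^2*y^8) + (4*a^2*b^2*x^3*y^7 + -12*a^2*b^2*x^4*y^6))) + ((12*a^2*b^2*x^5*y^5 + (-12*a^2*b^2*x^6*y^4 + 4*a^2*b^2*x^7*y^3)) + ((3*a^2*b^2*x^8*y^2 + -a^2*b^2*x^9*y) + (-5*a^3*b^2*x*y^8 + 2*a^3*b^2*x^2*y^7))))))) + ((((((-6*a^3*b^2*x^3*y^6 + (9*a^3*b^2*x^4*y^5 + 9*a^3*b^2*x^5*y^4)) + ((-6*a^3*b^2*x^6*y^3 + 2*a^3*b^2*x^7*y^2) + (-5*a^3*b^2*x^8*y + a^4*b^2*y^8))) + ((-2*a^4*b^2*x*y^7 + (3*a^4*b^2*x^2*y^6 + 5*a^4*b^2*x^3*y^5)) + ((-14*a^4*b^2*x^4*y^4 + 5*a^4*b^2*x^5*y^3) + (3*a^4*b^2*x^6*y^2 + -2*a^4*b^2*x^7*y)))) + (((a^4*b^2*x^8 + (a^5*b^2*y^7 + 3*a^5*b^2*x*y^6)) + ((-4*a^5*b^2*x^3*y^4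 + -4*a^5*b^2*x^4*y^3) + (3*a^5*b^2*x^6*y + a^5*b^2*x^7))) + ((-3*a^6*b^2*x*y^5 + (-3*a^6*b^2*x^2*y^4 + 12*a^6*b^2*x^3*y^3)) + ((-3*a^6*b^2*x^4*y^2 + -3*a^6*b^2*x^5*y) + (2*b^3*x^2*y^8 + 2*b^3*x^4*y^6))))) + ((((-8*b^3*x^5*y^5 + (2*b^3*x^6*y^4 + 2*b^3*x^8*y^2)) + ((-2*a*b^3*x*y^8 + 2*a*b^3*x^3*y^6) + (2*a*b^3*x^6*y^3 + -2*a*b^3*x^8*y))) + ((-5*a^2*b^3*x*y^7 + (2*a^2*b^3*x^2*y^6 + -3*a^2*b^3*x^3*y^5)) + ((12*a^2*b^3*x^4*y^4 + -3*a^2*b^3*x^5*y^3) + (2*a^2*b^3*x^6*y^2 + -5*a^2*b^3*x^7*y)))) + (((3*a^3*b^3*y^7 + (-2*a^3*b^3*x*y^6 + 8*a^3*b^3*x^2*y^5)) + ((-9*a^3*b^3*x^3*y^4 + -9*a^3*b^3*x^4*y^3) + (8*a^3*b^3*x^5*y^2 + -2*a^3*b^3*x^6*y))) + ((3*a^3*b^3*x^7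 + (2*a^4*b^3*y^6 + 2*a^4*b^3*x^2*y^4)) + ((-8*a^4*b^3*x^3*y^3 + 2*a^4*b^3*x^4*y^2) + (2*a^4*b^3*x^6 + -a^5*b^3*y^5)))))) + (((((-7*a^5*b^3*x*y^4 + (8*a^5*b^3*x^2*y^3 + 8*a^5*b^3*x^3*y^2)) + ((-7*a^5*b^3*x^4*y + -a^5*b^3*x^5) + (-b^4*x*y^7 + -2*b^4*x^2*y^6))) + ((2*b^4*x^3*y^5 + (2*b^4*x^4*y^4 + 2*b^4*x^5*y^3)) + ((-2*b^4*x^6*y^2 + -b^4*x^7*y) + (a*b^4*x*y^6 + -3*a*b^4*x^2*y^5)))) + (((2*a*b^4*x^3*y^4 + (2*a*b^4*x^4*y^3 + -3*a*b^4*x^5*y^2)) + ((a*b^4*x^6*y + 3*a^2*b^4*y^6) + (a^2*b^4*x*y^5 + -a^2*b^4*x^2*y^4))) + ((-6*a^2*b^4*x^3*y^3 + (-a^2*b^4*x^4*y^2 + a^2*b^4*x^5*y)) + ((3*a^2*b^4*x^6 + -3*a^4*b^4*y^4) + (-3*a^4*b^4*x*y^3 + 12*a^4*b^4*x^2*y^2)))))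 + ((((-3*a^4*b^4*x^3*y + (-3*a^4*b^4*x^4 + 2*b^5*x*y^5)) + ((-2*b^5*x^2*y^4 + -2*b^5*x^4*y^2) + (2*b^5*x^5*y + a*b^5*y^5))) + ((-a*b^5*x^2*y^3 + (-a*b^5*x^3*y^2 + a*b^5*x^5)) + ((-2*a^2*b^5*y^4 + 2*a^2*b^5*x*y^3) + (2*a^2*b^5*x^3*y + -2*a^2*b^5*x^4)))) + (((-3*a^3*b^5*y^3 + (3*a^3*b^5*x*y^2 + 3*a^3*b^5*x^2*y)) + ((-3*a^3*b^5*x^3 + -b^6*x*y^3) + (2*b^6*x^2*y^2 + -b^6*x^3*y))) + ((-a*b^6*y^3 + (a*b^6*x*y^2 + a*b^6*x^2*y)) + ((-a*b^6*x^3 + -a^2*b^6*y^2) + (2*a^2*b^6*x*y + -a^2*b^6*x^2))))))))) * hcurve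
  have hu : R x y * (x * (x - y) * (y ^ 2 - a * x - b))
      = (x * y - a * y - b) * (x ^ 2 * y - a ^ 2 * x - b * y - a * b) := by
    simp only [R]; exact div_mul_cancel₀ _ hDx
  have hv : R y x * (y * (y - x) * (x ^ 2 - a * y - b))
      = (y * x - a * x - b) * (y ^ 2 * x - a ^ 2 * y - b * x - a * b) := by
    simp only [R]; exact div_mul_cancel₀ _ hDy
  obtain ⟨u, hud⟩ : ∃ u, u = R x y := ⟨_, rfl⟩
  obtain ⟨v, hvd⟩ : ∃ v, v = R y x := ⟨_, rfl⟩
  obtain ⟨dx, hdx⟩ : ∃ d, d = x * (x - y) * (y ^ 2 - a * x - b) := ⟨_, rfl⟩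
  obtain ⟨dy, hdy⟩ : ∃ d, d = y * (y - x) * (x ^ 2 - a * y - b) := ⟨_, rfl⟩
  obtain ⟨nx, hnx⟩ : ∃ n, n = (x * y - a * y - b) * (x ^ 2 * y - a ^ 2 * x - b * y - a * b) :=
    ⟨_, rfl⟩
  obtain ⟨ny, hny⟩ : ∃ n, n = (y * x - a * x - b) * (y ^ 2 * x - a ^ 2 * y - b * x - a * b) :=
    ⟨_, rfl⟩
  rw [← hud, ← hvd]
  rw [← hud, ← hdx, ← hnx] at hu
  rw [← hvd, ← hdy, ← hny] at hv
  rw [← hdx] at hDx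
  rw [← hdy] at hDy
  rw [← hdx, ← hdy, ← hnx, ← hny] at step2
  have hs : (u + v) * (dx * dy) = nx * dy + ny * dx := by
    linear_combination dy * hu + dx * hv
  have hp : (u * v) * (dx * dy) = nx * ny := by
    linear_combination (v * dy) * hu + nx * hv
  have step1 : (u * v * (u + v) + a * (u + v) ^ 2 + (a ^ 2 + b) * (u + v) + a * b
      - K * (u * v)) * (dx * dy) ^ 2
      = (nx * dy + ny * dx) * (nx * ny) + a * (nx * dy + ny * dx) ^ 2
        + (a ^ 2 + b) * (nx * dy + ny * dx) * (dx * dy)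
        + a * b * (dx * dy) ^ 2 - K * (nx * ny) * (dx * dy) := by
    linear_combination ((u * v) * (dx * dy) + a * ((u + v) * (dx * dy) + (nx * dy + ny * dx))
        + (a ^ 2 + b) * (dx * dy)) * hs + ((nx * dy + ny * dx) - K * (dx * dy)) * hp
  have key := step1.trans step2
  rcases mul_eq_zero.mp key with h | h
  · exact h
  · exact absurd h (pow_ne_zero 2 (mul_ne_zero hDx hDy))
end

section
/- The point 4P = (-b/a, -a - b(Ka+b)/(a(a²-b))) lies on the Lyness curve xy(x+y) + a(x+y)² + (a²+b)(x+y) + ab - K·xy = 0, provided a ≠ 0 and a² ≠ b. -/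
/-- The point `4P = (-b/a, -a - b(Ka+b)/(a(a²-b)))` lies on the Lyness curve. -/
theorem lyness_fourP_on_curve {F : Type*} [Field F] (a b K : F)
    (ha : a ≠ 0) (hab : a ^ 2 - b ≠ 0) :
    let x : F := -b / a
    let y : F := -a - b * (K * a + b) / (a * (a ^ 2 - b))
    x * y * (x + y) + a * (x + y) ^ 2 + (a ^ 2 + b) * (x + y) + a * b
      - K * (x * y) = 0 := by
  intro x y
  simp only [x, y]
  field_simp
  ring
end

section
/- Given a point (ν, ξ) with ξ ≠ 0 on the Weierstrass cubic y'² = x'³ + Ax' + B, set α = 4ξ², J = 6ν² + 2A, β = J²/4 - 12νξ². Then for any other point (x', y') on the same cubic with x' ≠ ν, the pair (u, v) = (ν - x', (4ξy' + Ju - α)/(2u²)) satisfies the Somos-4 curve equation u²v² + α(u+v) + β - J·uv = 0. -/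
/-- The birational map from a Weierstrass cubic to the Somos-4 curve. -/
theorem weierstrass_to_somos4 {F : Type*} [Field F] (hchar2 : (2 : F) ≠ 0)
    (hchar3 : (3 : F) ≠ 0) (A B ν ξ x' y' : F) (hξ : ξ ≠ 0)
    (hP : ξ ^ 2 = ν ^ 3 + A * ν + B)
    (hQ : y' ^ 2 = x' ^ 3 + A * x' + B) (hne : x' ≠ ν) :
    let α : F := 4 * ξ ^ 2
    let J : F := 6 * ν ^ 2 + 2 * A
    let β : F := J ^ 2 / 4 - 12 * ν * ξ ^ 2
    let u : F := ν - x'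
    let v : F := (4 * ξ * y' + J * u - α) / (2 * u ^ 2)
    u ^ 2 * v ^ 2 + α * (u + v) + β - J * (u * v) = 0 := by
  intro α J β u v
  have hu : (ν - x' : F) ≠ 0 := sub_ne_zero.mpr fun h => hne h.symm
  have h4ne : (4 : F) ≠ 0 := by
    rw [show (4 : F) = 2 ^ 2 by norm_num]; exact pow_ne_zero 2 hchar2
  have h2 : (2 * (ν - x') ^ 2 : F) ≠ 0 := mul_ne_zero hchar2 (pow_ne_zero 2 hu)
  have hveq : v * (2 * (ν - x') ^ 2)
      = 4 * ξ * y' + (6 * ν ^ 2 + 2 * A) * (ν - x') - 4 * ξ ^ 2 :=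
    div_mul_cancel₀ _ h2
  clear_value v
  show (ν - x') ^ 2 * v ^ 2 + 4 * ξ ^ 2 * ((ν - x') + v) +
      ((6 * ν ^ 2 + 2 * A) ^ 2 / 4 - 12 * ν * ξ ^ 2) -
      (6 * ν ^ 2 + 2 * A) * ((ν - x') * v) = 0
  rw [show ((6 * ν ^ 2 + 2 * A) ^ 2 / 4 : F) = (3 * ν ^ 2 + A) ^ 2 by
    field_simp; ring]
  have h4 : (4 * (ν - x') ^ 4 : F) ≠ 0 := mul_ne_zero h4ne (pow_ne_zero 4 hu)
  refine (mul_eq_zero.mp ?_).resolve_right h4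
  linear_combination (16 * ξ ^ 2 * (ν - x') ^ 2) * hQ - (16 * ξ ^ 2 * (ν - x') ^ 2) * hP +
    ((ν - x') ^ 2 * (v * (2 * (ν - x') ^ 2) +
      (4 * ξ * y' + (6 * ν ^ 2 + 2 * A) * (ν - x') - 4 * ξ ^ 2)) +
      8 * ξ ^ 2 * (ν - x') ^ 2 - 2 * (6 * ν ^ 2 + 2 * A) * (ν - x') ^ 3) * hveq
end
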